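/- arXiv:2502.15687 — 3 statements merged into one kernel-verified Lean document; each statement's English description precedes it below -/
import Mathlib

section
/- Let D be a nonempty finite set, and let (Ω, ℱ, P) be a probability space. For each d ∈ D let O_d : Ω → {0,1} be an integrable random click indicator with E[O_d] = ô_d where ô_d ∈ (0,1], let e_d ∈ ℝ be the true per-sample loss, and let ê_d ∈ ℝ be an arbitrary imputed loss. Define the doubly robust loss L_DR(ω) = (1/|D|) Σ_{d ∈ D} [ ê_d + O_d(ω)·(e_d − ê_d)/ô_d ] and the ideal loss L_ideal = (1/|D|) Σ_{d ∈ D} e_d. Then E[L_DR] = L_ideal, regardless of the values of the imputed losses ê_d. -/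
open MeasureTheory

section DoublyRobust

variable {Ω : Type*} [MeasurableSpace Ω] {P : Measure Ω} {X : Ω → ℝ}

lemma MeasureTheory.Integrable.const_add_mul_sub_div [IsFiniteMeasure P] (hX : Integrable X P)
    (a b p : ℝ) :
    Integrable (fun ω => a + X ω * (b - a) / p) P := by
  simp only [mul_div_assoc]
  exact (integrable_const a).add (hX.mul_const _)

/-- Since `E[X] = p`, the inverse-propensity correction `X (b - a) / p` has mean `b - a`,
so the imputed value `a` cancels. -/
lemma integral_const_add_mul_sub_div_eq [IsProbabilityMeasure P] (hX : Integrable X P) {p : ℝ}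
    (hp : p ≠ 0) (hmean : ∫ ω, X ω ∂P = p) (a b : ℝ) :
    ∫ ω, (a + X ω * (b - a) / p) ∂P = b := by
  simp only [mul_div_assoc]
  rw [integral_add (integrable_const a) (hX.mul_const _), integral_const, integral_mul_const,
    hmean, probReal_univ, one_smul]
  field_simp
  ring

end DoublyRobust

theorem dr_estimator_unbiased_general {α : Type*} (D : Finset α)
    {Ω : Type*} [MeasurableSpace Ω] (P : Measure Ω) [IsProbabilityMeasure P]
    (O : α → Ω → ℝ)
    (hOint : ∀ d ∈ D, Integrable (O d) P)
    (oh : α → ℝ) (hoh : ∀ d ∈ D, oh d ∈ Set.Ioc (0 : ℝ) 1)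
    (hOmean : ∀ d ∈ D, ∫ ω, O d ω ∂P = oh d)
    (e ehat : α → ℝ) :
    ∫ ω, (1 / (D.card : ℝ)) * ∑ d ∈ D, (ehat d + O d ω * (e d - ehat d) / oh d) ∂P
      = (1 / (D.card : ℝ)) * ∑ d ∈ D, e d := by
  rw [integral_const_mul,
    integral_finsetSum D fun d hd => (hOint d hd).const_add_mul_sub_div _ _ _]
  congr 1
  exact Finset.sum_congr rfl fun d hd =>
    integral_const_add_mul_sub_div_eq (hOint d hd) (hoh d hd).1.ne' (hOmean d hd) _ _

/-- With accurate click propensities `ô_d = E[O_d] ∈ (0,1]`, the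
doubly robust CVR loss is unbiased, `E[L_DR] = L_ideal`, regardless of the values of
the imputed losses `ê_d`. -/
theorem dr_estimator_unbiased {α : Type*} (D : Finset α) (hD : D.Nonempty)
    {Ω : Type*} [MeasurableSpace Ω] (P : Measure Ω) [IsProbabilityMeasure P]
    (O : α → Ω → ℝ) (hO01 : ∀ d ∈ D, ∀ ω, O d ω = 0 ∨ O d ω = 1)
    (hOint : ∀ d ∈ D, Integrable (O d) P)
    (oh : α → ℝ) (hoh : ∀ d ∈ D, oh d ∈ Set.Ioc (0 : ℝ) 1)
    (hOmean : ∀ d ∈ D, ∫ ω, O d ω ∂P = oh d)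
    (e ehat : α → ℝ) :
    ∫ ω, (1 / (D.card : ℝ)) * ∑ d ∈ D, (ehat d + O d ω * (e d - ehat d) / oh d) ∂P
      = (1 / (D.card : ℝ)) * ∑ d ∈ D, e d :=
  dr_estimator_unbiased_general D P O hOint oh hoh hOmean e ehat
end

section
/- Let (Ω, ℱ, P) be a probability space, let X : Ω → 𝒳 be a random variable taking values in a nonempty finite type 𝒳 and let O : Ω → {0,1} be a random variable. Define the propensity score e : 𝒳 → ℝ by e(x) = P(O = 1 | X = x) for x with P(X = x) > 0 (and arbitrarily otherwise). Then for every v ∈ ℝ with P(e(X) = v) > 0, one has P(O = 1 | e(X) = v) = v. -/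
/-!
The event `e(X) = v` is the disjoint union of the finitely many fibres `X = x` with `e x = v`.
On each non-null fibre the event `O = 1` has conditional probability `e x = v`, i.e.
`P({X = x} ∩ {O = 1}) = v * P(X = x)`, and this also holds trivially on null fibres;
summing over the fibres gives `P({e(X) = v} ∩ {O = 1}) = v * P(e(X) = v)`.
-/

open MeasureTheory ProbabilityTheory

namespace ProbabilityTheory

variable {Ω α : Type*} [MeasurableSpace Ω] {μ : Measure Ω} [IsFiniteMeasure μ]

theorem measureReal_inter_eq_mul_of_toReal_cond_eq {s t : Set Ω} {c : ℝ} (hs : MeasurableSet s)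
    (h : μ s ≠ 0 → (μ[t | s]).toReal = c) : μ.real (s ∩ t) = c * μ.real s := by
  obtain hs0 | hs0 := eq_or_ne (μ s) 0
  · simp [Measure.real, hs0, measure_inter_null_of_null_left]
  · rw [← h hs0, measureReal_def, ← cond_mul_eq_inter hs t μ, ENNReal.toReal_mul, measureReal_def]

theorem toReal_cond_preimage_eq_of_forall_fiber [MeasurableSpace α] [MeasurableSingletonClass α]
    {X : Ω → α} (hX : Measurable X) (S : Finset α) {t : Set Ω} {c : ℝ}
    (h : ∀ x ∈ S, μ (X ⁻¹' {x}) ≠ 0 → (μ[t | X ⁻¹' {x}]).toReal = c)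
    (hS : μ (X ⁻¹' S) ≠ 0) : (μ[t | X ⁻¹' S]).toReal = c := by
  have hfiber (x : α) : MeasurableSet (X ⁻¹' {x}) := hX (measurableSet_singleton x)
  have hinter : μ.real (X ⁻¹' S ∩ t) = c * μ.real (X ⁻¹' S) := calc
    μ.real (X ⁻¹' S ∩ t) = ∑ x ∈ S, μ.real (X ⁻¹' {x} ∩ t) := by
      simp only [← measureReal_restrict_apply (hfiber _),
        ← measureReal_restrict_apply (hX S.measurableSet),
        sum_measureReal_preimage_singleton (μ := μ.restrict t) S fun x _ => hfiber x]
    _ = ∑ x ∈ S, c * μ.real (X ⁻¹' {x}) :=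
      Finset.sum_congr rfl fun x hx =>
        measureReal_inter_eq_mul_of_toReal_cond_eq (hfiber x) (h x hx)
    _ = c * μ.real (X ⁻¹' S) := by
      rw [← Finset.mul_sum, sum_measureReal_preimage_singleton S fun x _ => hfiber x]
  have hS' : μ.real (X ⁻¹' S) ≠ 0 := (measureReal_eq_zero_iff).not.mpr hS
  rw [cond_apply (hX S.measurableSet), ENNReal.toReal_mul, ENNReal.toReal_inv, ← measureReal_def,
    ← measureReal_def, hinter, mul_comm c, inv_mul_cancel_left₀ hS']

end ProbabilityTheory

theorem propensity_balancing_general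
    {Ω : Type*} [MeasurableSpace Ω] (P : Measure Ω) [IsProbabilityMeasure P]
    {𝒳 : Type*} [Fintype 𝒳] [MeasurableSpace 𝒳] [MeasurableSingletonClass 𝒳]
    (X : Ω → 𝒳) (hX : Measurable X)
    (O : Ω → ℝ)
    (e : 𝒳 → ℝ)
    (he : ∀ x : 𝒳, 0 < P {ω | X ω = x} →
      e x = (P[{ω | O ω = 1} | {ω | X ω = x}]).toReal) :
    ∀ v : ℝ, 0 < P {ω | e (X ω) = v} →
      (P[{ω | O ω = 1} | {ω | e (X ω) = v}]).toReal = v := by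
  classical
  intro v hv
  have hlevel : {ω | e (X ω) = v} = X ⁻¹' ↑(Finset.univ.filter fun x => e x = v) := by
    ext; simp
  rw [hlevel] at hv ⊢
  refine toReal_cond_preimage_eq_of_forall_fiber hX _ (fun x hx hPx => ?_) hv.ne'
  rw [← (Finset.mem_filter.mp hx).2]
  exact (he x (pos_iff_ne_zero.mpr hPx)).symm

/-- **balancing property of the propensity score.** Let `X` be a random
variable with values in a nonempty finite type and `O` a click indicator. If
`e x = P(O = 1 | X = x)` for every `x` with `P(X = x) > 0`, then for every real `v`
with `P(e(X) = v) > 0` one has `P(O = 1 | e(X) = v) = v`. -/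
theorem propensity_balancing
    {Ω : Type*} [MeasurableSpace Ω] (P : Measure Ω) [IsProbabilityMeasure P]
    {𝒳 : Type*} [Fintype 𝒳] [Nonempty 𝒳] [MeasurableSpace 𝒳] [MeasurableSingletonClass 𝒳]
    (X : Ω → 𝒳) (hX : Measurable X)
    (O : Ω → ℝ) (hO01 : ∀ ω, O ω = 0 ∨ O ω = 1) (hmO : MeasurableSet {ω | O ω = 1})
    (e : 𝒳 → ℝ)
    (he : ∀ x : 𝒳, 0 < P {ω | X ω = x} →
      e x = (P[{ω | O ω = 1} | {ω | X ω = x}]).toReal) :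
    ∀ v : ℝ, 0 < P {ω | e (X ω) = v} →
      (P[{ω | O ω = 1} | {ω | e (X ω) = v}]).toReal = v :=
  propensity_balancing_general P X hX O e he
end

section
/- Let (Ω, ℱ, P) be a probability space, let X : Ω → 𝒳 be a random variable taking values in a nonempty finite type 𝒳, let O : Ω → {0,1} be the treatment (click) indicator, and let Y : Ω → 𝒴 be a random variable taking values in a finite type 𝒴 (the pair of potential conversion outcomes). Assume unconfoundedness given X: for every x with P(X = x) > 0 and every y ∈ 𝒴, P(O = 1, Y = y | X = x) = P(O = 1 | X = x)·P(Y = y | X = x). Define the propensity score e(x) = P(O = 1 | X = x). Then Y and O are conditionally independent given e(X): for every v with P(e(X) = v) > 0 and every y ∈ 𝒴, P(O = 1, Y = y | e(X) = v) = P(O = 1 | e(X) = v)·P(Y = y | e(X) = v). -/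
/-!
The event `{e(X) = v}` is the disjoint union of the fibres `{X = x}` with `e x = v`, and on each
of them the click probability is the same number `v`. Unconfoundedness says that on every fibre
`P(O = 1, Y = y, X = x) = v · P(Y = y, X = x)`; summing over the fibres gives
`P(O = 1, Y = y, e(X) = v) = v · P(Y = y, e(X) = v)`, and likewise without `Y`, which is
conditional independence given `e(X)`.
-/

open MeasureTheory ProbabilityTheory ENNReal

section ConditionalIndependence

variable {Ω α : Type*} [MeasurableSpace Ω] [MeasurableSpace α] {μ : Measure Ω}
  {A T s : Set Ω} {c : ℝ≥0∞}

theorem cond_inter_eq_mul_iff [IsFiniteMeasure μ] (hs : MeasurableSet s) :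
    μ[A ∩ T | s] = c * μ[T | s] ↔ μ (s ∩ (A ∩ T)) = c * μ (s ∩ T) := by
  refine ⟨fun h => ?_, fun h => ?_⟩
  · rw [← cond_mul_eq_inter hs, h, mul_assoc, cond_mul_eq_inter hs]
  · rw [cond_apply hs, cond_apply hs, h, mul_left_comm]

theorem measure_preimage_inter_eq_sum [MeasurableSingletonClass α] {X : Ω → α}
    (hX : Measurable X) (S : Finset α) (U : Set Ω) :
    μ (X ⁻¹' S ∩ U) = ∑ x ∈ S, μ (X ⁻¹' {x} ∩ U) := by
  rw [← Measure.restrict_apply (hX S.measurableSet),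
    ← sum_measure_preimage_singleton S fun x _ => hX (measurableSet_singleton x)]
  exact Finset.sum_congr rfl fun x _ => Measure.restrict_apply (hX (measurableSet_singleton x))

theorem cond_inter_preimage_eq_mul [IsFiniteMeasure μ] [MeasurableSingletonClass α]
    {X : Ω → α} (hX : Measurable X) (S : Finset α)
    (h : ∀ x ∈ S, μ[A ∩ T | X ⁻¹' {x}] = c * μ[T | X ⁻¹' {x}]) :
    μ[A ∩ T | X ⁻¹' S] = c * μ[T | X ⁻¹' S] := by
  rw [cond_inter_eq_mul_iff (hX S.measurableSet), measure_preimage_inter_eq_sum hX,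
    measure_preimage_inter_eq_sum hX, Finset.mul_sum]
  exact Finset.sum_congr rfl fun x hx =>
    (cond_inter_eq_mul_iff (hX (measurableSet_singleton x))).1 (h x hx)

end ConditionalIndependence

theorem rosenbaum_rubin_propensity_general
    {Ω : Type*} [MeasurableSpace Ω] (P : Measure Ω) [IsProbabilityMeasure P]
    {𝒳 : Type*} [Fintype 𝒳] [MeasurableSpace 𝒳] [MeasurableSingletonClass 𝒳]
    {𝒴 : Type*}
    (X : Ω → 𝒳) (hX : Measurable X)
    (O : Ω → ℝ)
    (Y : Ω → 𝒴)
    (hunconf : ∀ x : 𝒳, 0 < P {ω | X ω = x} → ∀ y : 𝒴,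
      P[{ω | O ω = 1} ∩ {ω | Y ω = y} | {ω | X ω = x}]
        = P[{ω | O ω = 1} | {ω | X ω = x}] * P[{ω | Y ω = y} | {ω | X ω = x}])
    (e : 𝒳 → ℝ)
    (he : ∀ x : 𝒳, 0 < P {ω | X ω = x} →
      e x = (P[{ω | O ω = 1} | {ω | X ω = x}]).toReal) :
    ∀ v : ℝ, 0 < P {ω | e (X ω) = v} → ∀ y : 𝒴,
      P[{ω | O ω = 1} ∩ {ω | Y ω = y} | {ω | e (X ω) = v}]
        = P[{ω | O ω = 1} | {ω | e (X ω) = v}]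
          * P[{ω | Y ω = y} | {ω | e (X ω) = v}] := by
  intro v hv y
  set S := Finset.univ.filter fun x => e x = v
  have hE : {ω | e (X ω) = v} = X ⁻¹' S := by ext; simp [S]
  have hfibre : ∀ T : Set Ω, (∀ x, 0 < P {ω | X ω = x} →
      P[{ω | O ω = 1} ∩ T | {ω | X ω = x}]
        = P[{ω | O ω = 1} | {ω | X ω = x}] * P[T | {ω | X ω = x}]) →
      P[{ω | O ω = 1} ∩ T | {ω | e (X ω) = v}]
        = ENNReal.ofReal v * P[T | {ω | e (X ω) = v}] := by
    intro T hT
    rw [hE]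
    refine cond_inter_preimage_eq_mul hX S fun x hx => ?_
    rcases eq_zero_or_pos (P {ω | X ω = x}) with hx0 | hxpos
    · simp [cond_eq_zero_of_meas_eq_zero (s := X ⁻¹' {x}) hx0]
    · have hc : P[{ω | O ω = 1} | {ω | X ω = x}] = ENNReal.ofReal v := by
        rw [← (Finset.mem_filter.1 hx).2, he x hxpos, ofReal_toReal (measure_ne_top _ _)]
      rw [← hc]
      exact hT x hxpos
  have hprob : ∀ s : Set Ω, 0 < P s → P[Set.univ | s] = 1 := fun s hs =>
    haveI := cond_isProbabilityMeasure (μ := P) hs.ne'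
    measure_univ
  have hclick : P[{ω | O ω = 1} | {ω | e (X ω) = v}] = ENNReal.ofReal v := by
    simpa [hprob _ hv] using hfibre Set.univ fun x hx => by simp [hprob _ hx]
  rw [hclick]
  exact hfibre _ fun x hx => hunconf x hx y

/-- **Rosenbaum–Rubin, Theorem 3.** If the outcome `Y` and the click
indicator `O` are conditionally independent given the covariates `X` (unconfoundedness),
then they are conditionally independent given the propensity score
`e(X) = P(O = 1 | X)`. -/
theorem rosenbaum_rubin_propensity
    {Ω : Type*} [MeasurableSpace Ω] (P : Measure Ω) [IsProbabilityMeasure P]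
    {𝒳 : Type*} [Fintype 𝒳] [Nonempty 𝒳] [MeasurableSpace 𝒳] [MeasurableSingletonClass 𝒳]
    {𝒴 : Type*} [Fintype 𝒴] [MeasurableSpace 𝒴] [MeasurableSingletonClass 𝒴]
    (X : Ω → 𝒳) (hX : Measurable X)
    (O : Ω → ℝ) (hO01 : ∀ ω, O ω = 0 ∨ O ω = 1) (hmO : MeasurableSet {ω | O ω = 1})
    (Y : Ω → 𝒴) (hY : Measurable Y)
    (hunconf : ∀ x : 𝒳, 0 < P {ω | X ω = x} → ∀ y : 𝒴,
      P[{ω | O ω = 1} ∩ {ω | Y ω = y} | {ω | X ω = x}]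
        = P[{ω | O ω = 1} | {ω | X ω = x}] * P[{ω | Y ω = y} | {ω | X ω = x}])
    (e : 𝒳 → ℝ)
    (he : ∀ x : 𝒳, 0 < P {ω | X ω = x} →
      e x = (P[{ω | O ω = 1} | {ω | X ω = x}]).toReal) :
    ∀ v : ℝ, 0 < P {ω | e (X ω) = v} → ∀ y : 𝒴,
      P[{ω | O ω = 1} ∩ {ω | Y ω = y} | {ω | e (X ω) = v}]
        = P[{ω | O ω = 1} | {ω | e (X ω) = v}]
          * P[{ω | Y ω = y} | {ω | e (X ω) = v}] :=
  rosenbaum_rubin_propensity_general P X hX O Y hunconf e he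
end
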